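/- Continuity of Lévy-measure tails of a full stable law (Appendix Lemma B.2): Let d ≥ 2, α ∈ (0,2), and let Λ be a finite Borel measure on the unit sphere S^{d−1} whose support spans ℝ^d (fullness). Define the Lévy measure φ on ℝ^d ∖ {0} as the pushforward under the map (θ, r) ↦ r θ of the product of Λ with the measure on (0,∞) having density r ↦ α k_α r^{−α−1}, where k_α = 2Γ(α) sin(απ/2)/π. For x ∈ ℝ^d set B_x = { y ∈ ℝ^d : x · y > 1 }. Then the map x ↦ φ(B_x) is continuous on ℝ^d ∖ {0}. -/

import Mathlib

open MeasureTheory Matrix Real Set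

/-- The unit sphere `S^{d-1}` in `ℝ^d`. -/
def Sph (d : ℕ) : Set (Fin d → ℝ) := {v | v ⬝ᵥ v = 1}

/-- The constant `k_α = 2Γ(α) sin(απ/2)/π`. -/
noncomputable def kconst (α : ℝ) : ℝ := 2 * Real.Gamma α * Real.sin (α * π / 2) / π

/-- The radial measure on `(0,∞)` with density `r ↦ α k_α r^{-α-1}`. -/
noncomputable def radMeasure (α : ℝ) : Measure ℝ :=
  (volume.restrict (Set.Ioi (0 : ℝ))).withDensity
    (fun r => ENNReal.ofReal (α * kconst α * r ^ (-α - 1)))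

/-- The Lévy measure of the `α`-stable law with spectral measure `Λ` on `S^{d-1}`:
the pushforward of `Λ ⊗ (α k_α r^{-α-1} dr)` under `(θ, r) ↦ r θ`. -/
noncomputable def levyOf {d : ℕ} (α : ℝ) (Λ : Measure ↥(Sph d)) : Measure (Fin d → ℝ) :=
  Measure.map (fun p : ↥(Sph d) × ℝ => p.2 • (p.1 : Fin d → ℝ)) (Λ.prod (radMeasure α))

/-!
In polar coordinates the half-space `{y : x·y > 1}` meets the ray through `θ` in
`{r : r (x·θ) > 1}`, whose radial mass is `k_α (x·θ)_+^α`. Hence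
`φ(B_x) = ∫ k_α (x·θ)_+^α dΛ(θ)`, the integral of a jointly continuous function over the
compact sphere against a finite measure, which is continuous in `x`.
-/

lemma kconst_pos {α : ℝ} (hα : α ∈ Ioo (0 : ℝ) 2) : 0 < kconst α := by
  obtain ⟨h0, h2⟩ := hα
  have hsin : 0 < sin (α * π / 2) :=
    sin_pos_of_pos_of_lt_pi (by positivity) (by nlinarith [pi_pos])
  have := Gamma_pos_of_pos h0
  unfold kconst
  positivity

lemma radMeasure_Ioi {α t : ℝ} (hα : α ∈ Ioo (0 : ℝ) 2) (ht : 0 < t) :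
    radMeasure α (Ioi t) = ENNReal.ofReal (kconst α * t ^ (-α)) := by
  have hint : IntegrableOn (fun r : ℝ => α * kconst α * r ^ (-α - 1)) (Ioi t) :=
    (integrableOn_Ioi_rpow_of_lt (by linarith [hα.1]) ht).const_mul _
  have hpos : ∀ᵐ r ∂volume.restrict (Ioi t), 0 ≤ α * kconst α * r ^ (-α - 1) := by
    filter_upwards [ae_restrict_mem measurableSet_Ioi] with r hr
    have := kconst_pos hα
    have := hα.1
    have : 0 < r := ht.trans hr
    positivity
  rw [radMeasure, withDensity_apply _ measurableSet_Ioi,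
    Measure.restrict_restrict measurableSet_Ioi, inter_eq_left.mpr (Ioi_subset_Ioi ht.le),
    ← ofReal_integral_eq_lintegral_ofReal hint hpos,
    integral_const_mul, integral_Ioi_rpow_of_lt (by linarith [hα.1]) ht, sub_add_cancel]
  congr 1
  field_simp [hα.1.ne']

lemma radMeasure_setOf_one_lt_mul {α : ℝ} (hα : α ∈ Ioo (0 : ℝ) 2) (c : ℝ) :
    radMeasure α {r | 1 < r * c} = ENNReal.ofReal (kconst α * max c 0 ^ α) := by
  rcases le_or_gt c 0 with hc | hc
  · have hempty : {r | 1 < r * c} ∩ Ioi 0 = ∅ :=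
      eq_empty_iff_forall_notMem.mpr fun r ⟨(h1 : 1 < r * c), (hr : 0 < r)⟩ => by nlinarith
    rw [radMeasure, withDensity_apply' _, Measure.restrict_restrict' measurableSet_Ioi, hempty,
      Measure.restrict_empty, lintegral_zero_measure, max_eq_right hc, zero_rpow hα.1.ne',
      mul_zero, ENNReal.ofReal_zero]
  · have hset : {r | 1 < r * c} = Ioi c⁻¹ := by
      ext r
      exact (inv_lt_iff_one_lt_mul₀ hc).symm
    rw [hset, radMeasure_Ioi hα (inv_pos.mpr hc), inv_rpow hc.le, ← rpow_neg_one,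
      ← rpow_mul hc.le, max_eq_left hc.le]
    ring_nf

lemma levyOf_setOf_one_lt_dotProduct {d : ℕ} {α : ℝ} (hα : α ∈ Ioo (0 : ℝ) 2)
    (Λ : Measure ↥(Sph d)) (x : Fin d → ℝ) :
    levyOf α Λ {y | 1 < x ⬝ᵥ y}
      = ∫⁻ θ, ENNReal.ofReal (kconst α * max (x ⬝ᵥ (θ : Fin d → ℝ)) 0 ^ α) ∂Λ := by
  have : SFinite (radMeasure α) := by rw [radMeasure]; infer_instance
  have hpolar : Measurable fun p : ↥(Sph d) × ℝ => p.2 • (p.1 : Fin d → ℝ) := by fun_prop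
  have hB : MeasurableSet {y : Fin d → ℝ | 1 < x ⬝ᵥ y} :=
    measurableSet_lt measurable_const (by fun_prop)
  rw [levyOf, Measure.map_apply hpolar hB, Measure.prod_apply (hpolar hB)]
  refine lintegral_congr fun θ => ?_
  have hray : Prod.mk θ ⁻¹' ((fun p : ↥(Sph d) × ℝ => p.2 • (p.1 : Fin d → ℝ)) ⁻¹'
      {y | 1 < x ⬝ᵥ y}) = {r | 1 < r * (x ⬝ᵥ (θ : Fin d → ℝ))} := by
    ext r
    simp [dotProduct_smul]
  rw [hray, radMeasure_setOf_one_lt_mul hα]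

lemma isCompact_sph (d : ℕ) : IsCompact (Sph d) := by
  refine Metric.isCompact_of_isClosed_isBounded
    (isClosed_eq (f := fun v : Fin d → ℝ => v ⬝ᵥ v) (by fun_prop) continuous_const)
    ((Metric.isBounded_closedBall (x := 0) (r := 1)).subset fun v (hv : v ⬝ᵥ v = 1) => ?_)
  rw [mem_closedBall_zero_iff, pi_norm_le_iff_of_nonneg zero_le_one]
  intro i
  rw [norm_eq_abs, abs_le_one_iff_mul_self_le_one, ← hv]
  exact Finset.single_le_sum (f := fun j => v j * v j) (fun j _ => mul_self_nonneg _)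
    (Finset.mem_univ i)

instance (d : ℕ) : CompactSpace (Sph d) := isCompact_iff_compactSpace.mp (isCompact_sph d)

lemma continuous_lintegral_ofReal_of_continuous {X Y : Type*} [TopologicalSpace X]
    [FirstCountableTopology X] [LocallyCompactSpace X] [TopologicalSpace Y] [CompactSpace Y]
    [MeasurableSpace Y] [OpensMeasurableSpace Y] (μ : Measure Y) [IsFiniteMeasure μ]
    {f : X → Y → ℝ} (hf : Continuous f.uncurry) (hf_nonneg : ∀ x y, 0 ≤ f x y) :
    Continuous fun x => ∫⁻ y, ENNReal.ofReal (f x y) ∂μ := by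
  have hint (x : X) : Integrable (f x) μ :=
    (hf.comp (Continuous.prodMk_right x)).integrable_of_hasCompactSupport
      (HasCompactSupport.of_compactSpace _)
  simp_rw [← ofReal_integral_eq_lintegral_ofReal (hint _) (.of_forall (hf_nonneg _))]
  have hcont := continuous_parametric_integral_of_continuous (μ := μ) hf isCompact_univ
  rw [Measure.restrict_univ] at hcont
  exact ENNReal.continuous_ofReal.comp hcont

theorem levy_tail_continuous_general
    {d : ℕ} (α : ℝ) (hα : α ∈ Set.Ioo (0 : ℝ) 2)
    (Λ : Measure ↥(Sph d)) [IsFiniteMeasure Λ] :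
    ContinuousOn (fun x : Fin d → ℝ => levyOf α Λ {y | 1 < x ⬝ᵥ y})
      {x : Fin d → ℝ | x ≠ 0} := by
  simp_rw [levyOf_setOf_one_lt_dotProduct hα]
  refine (continuous_lintegral_ofReal_of_continuous Λ ?_ fun x θ => ?_).continuousOn
  · have := Real.continuous_rpow_const (q := α) hα.1.le
    fun_prop
  · have := kconst_pos hα
    positivity

/-- **Continuity of Lévy-measure tails of a full stable law (Lemma B.2).** If `Λ` is a
finite spectral measure on `S^{d-1}` whose support spans `ℝ^d`, then `x ↦ φ(B_x)`,
with `B_x = {y : x·y > 1}` and `φ` the associated `α`-stable Lévy measure, is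
continuous on `ℝ^d ∖ {0}`. -/
theorem levy_tail_continuous
    {d : ℕ} (hd : 2 ≤ d) (α : ℝ) (hα : α ∈ Set.Ioo (0 : ℝ) 2)
    (Λ : Measure ↥(Sph d)) [IsFiniteMeasure Λ]
    (hfull : ∀ v : Fin d → ℝ, v ≠ 0 → Λ {θ : ↥(Sph d) | ¬ v ⬝ᵥ (θ : Fin d → ℝ) = 0} ≠ 0) :
    ContinuousOn (fun x : Fin d → ℝ => levyOf α Λ {y | 1 < x ⬝ᵥ y})
      {x : Fin d → ℝ | x ≠ 0} :=
  levy_tail_continuous_general α hα Λ
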